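/- arXiv:2312.03593 — 3 statements merged into one kernel-verified Lean document; each statement's English description precedes it below -/
import Mathlib

section
/- (Lemma 3(b)) Let k ≥ 2, let g : (k+1)^𝒳 → ℝ≥0 be a normalized k-submodular function (not necessarily monotone), let 𝟎 = x⁰ ⊑ x¹ ⊑ … ⊑ xᵐ be a greedy chain for g, and let v be any k-set. With vᵖ = (v ⊔ xᵖ) ⊔ xᵖ, one has g(v) − g(vᵐ) ≤ 2·g(xᵐ). -/
/-- A `k`-set: an assignment of each ground element to one of `k` parts or to none
(`none` meaning the element belongs to no part).  This encodes a tuple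
`(S_1, …, S_k)` of pairwise disjoint subsets of `X`. -/
abbrev KSet (X : Type*) (k : ℕ) := X → Option (Fin k)

namespace KSet

variable {X : Type*} {k : ℕ}

/-- The empty `k`-set `𝟎 = (∅, …, ∅)`. -/
def bot (X : Type*) (k : ℕ) : KSet X k := fun _ => none

/-- `le s t` is the partial order `s ⊑ t`, i.e. `Sᵢ ⊆ Tᵢ` for every `i ∈ [k]`. -/
def le (s t : KSet X k) : Prop := ∀ (x : X) (i : Fin k), s x = some i → t x = some i

/-- The meet `s ⊓ t`, whose `i`-th component is `Sᵢ ∩ Tᵢ`. -/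
def meet (s t : KSet X k) : KSet X k := fun x => if s x = t x then s x else none

/-- The join `s ⊔ t`, whose `i`-th component is `(Sᵢ ∪ Tᵢ) \ ⋃_{j ≠ i} (Sⱼ ∪ Tⱼ)`. -/
def join (s t : KSet X k) : KSet X k := fun x =>
  match s x, t x with
  | none, b => b
  | some i, none => some i
  | some i, some j => if i = j then some i else none

/-- The `k`-set `(x, i)` whose only nonempty component is `Sᵢ = {x}`. -/
def single [DecidableEq X] (x : X) (i : Fin k) : KSet X k :=
  fun y => if y = x then some i else none

/-- `s ⊔ (x, i)`: add the element `x` to the `i`-th part of `s`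
(intended for `x ∉ E(s)`). -/
def add [DecidableEq X] (s : KSet X k) (x : X) (i : Fin k) : KSet X k :=
  Function.update s x (some i)

end KSet

/-- The marginal gain `Δ_{x,i} g (s) = g (s ⊔ (x,i)) - g s`. -/
def marg {X : Type*} [DecidableEq X] {k : ℕ} (g : KSet X k → ℝ) (s : KSet X k)
    (x : X) (i : Fin k) : ℝ :=
  g (KSet.add s x i) - g s

/-- `g` is `k`-submodular: `g (s ⊓ t) + g (s ⊔ t) ≤ g s + g t` for all `k`-sets. -/
def KSubmodular {X : Type*} {k : ℕ} (g : KSet X k → ℝ) : Prop :=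
  ∀ s t : KSet X k, g (KSet.meet s t) + g (KSet.join s t) ≤ g s + g t

/-- `g` is monotone with respect to `⊑`. -/
def KMonotone {X : Type*} {k : ℕ} (g : KSet X k → ℝ) : Prop :=
  ∀ s t : KSet X k, KSet.le s t → g s ≤ g t

/-- The weight `w(s) = ∑_{x ∈ E(s)} w x` of a `k`-set. -/
def wtot {X : Type*} [Fintype X] {k : ℕ} (w : X → ℝ) (s : KSet X k) : ℝ :=
  ∑ x ∈ Finset.univ.filter (fun x => s x ≠ none), w x

/-- A greedy chain for `g`: `c 0 = 𝟎` and each step adds one new element at a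
position maximizing the marginal gain over `i ∈ [k]`. -/
def GreedyChain {X : Type*} [DecidableEq X] {k : ℕ} (g : KSet X k → ℝ) (m : ℕ)
    (c : ℕ → KSet X k) : Prop :=
  c 0 = KSet.bot X k ∧
  ∀ p, p < m → ∃ (xp : X) (ip : Fin k),
    c p xp = none ∧
    c (p + 1) = KSet.add (c p) xp ip ∧
    ∀ i : Fin k, marg g (c p) xp i ≤ marg g (c p) xp ip


/-!
Write `vᵖ = (v ⊔ xᵖ) ⊔ xᵖ`; it agrees with `xᵖ` on `E(xᵖ)` and with `v` elsewhere, so passing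
from `vᵖ` to `vᵖ⁺¹` only resets the value at the new element `x` to the greedy position `i`.
By telescoping it suffices to bound each loss `g(vᵖ) - g(vᵖ⁺¹)` by twice the greedy gain
`Δ_{x,i} g(xᵖ) = g(xᵖ⁺¹) - g(xᵖ)`. Let `s` be `vᵖ` with `x` removed, so `xᵖ ⊑ s`. The two
consequences of `k`-submodularity, pairwise monotonicity `Δ_{x,i} + Δ_{x,j} ≥ 0` (for `i ≠ j`)
and orthant submodularity (`Δ_{x,j}` is antitone in the base), together with greedy maximality
give `Δ_{x,j} g(s) ≤ Δ_{x,i} g(xᵖ)` for every `j`, and `-Δ_{x,i} g(s) ≤ Δ_{x,i} g(xᵖ)` using some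
`j ≠ i`. Whatever the value of `vᵖ` at `x`, these two bounds
control the loss.
-/

namespace KSet

variable {X : Type*} {k : ℕ}

theorem le_refl (s : KSet X k) : le s s := fun _ _ h => h

theorem eq_none_of_le {s t : KSet X k} (hts : le t s) {x : X} (hx : s x = none) :
    t x = none := by
  cases htx : t x with
  | none => rfl
  | some a => simp [hts x a htx] at hx

theorem join_join_self_apply (v c : KSet X k) (y : X) :
    join (join v c) c y = (c y).or (v y) := by
  rcases hv : v y with _ | a <;> rcases hc : c y with _ | b <;> simp only [join, hv, hc]
  · rfl
  · rfl
  · rfl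
  · split_ifs with hab <;> simp [hab]

theorem le_join_join_self (v c : KSet X k) : le c (join (join v c) c) := by
  intro y a h
  rw [join_join_self_apply, h]
  rfl

theorem join_join_bot (v : KSet X k) : join (join v (bot X k)) (bot X k) = v :=
  funext fun y => join_join_self_apply v (bot X k) y

variable [DecidableEq X]

theorem join_join_add (v c : KSet X k) (x : X) (i : Fin k) :
    join (join v (add c x i)) (add c x i) = Function.update (join (join v c) c) x (some i) := by
  funext y
  by_cases hy : y = x
  · subst hy
    simp [join_join_self_apply, add]
  · simp [join_join_self_apply, add, Function.update_of_ne hy]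

theorem meet_add_add (s : KSet X k) {x : X} (hx : s x = none) {i j : Fin k} (hij : i ≠ j) :
    meet (add s x i) (add s x j) = s := by
  funext y
  by_cases hy : y = x
  · subst hy
    simp [meet, add, hx, hij]
  · simp [meet, add, Function.update_of_ne hy]

theorem join_add_add (s : KSet X k) {x : X} (hx : s x = none) {i j : Fin k} (hij : i ≠ j) :
    join (add s x i) (add s x j) = s := by
  funext y
  by_cases hy : y = x
  · subst hy
    simp [join, add, hx, hij]
  · simp only [join, add, Function.update_of_ne hy]
    cases s y <;> simp

theorem meet_add_of_le {s t : KSet X k} (hts : le t s) {x : X} (hx : s x = none) (i : Fin k) :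
    meet (add t x i) s = t := by
  funext y
  by_cases hy : y = x
  · subst hy
    simp [meet, add, hx, eq_none_of_le hts hx]
  · simp only [meet, add, Function.update_of_ne hy]
    cases hty : t y with
    | none => split <;> simp_all
    | some a => simp [hts y a hty]

theorem join_add_of_le {s t : KSet X k} (hts : le t s) {x : X} (hx : s x = none) (i : Fin k) :
    join (add t x i) s = add s x i := by
  funext y
  by_cases hy : y = x
  · subst hy
    simp [join, add, hx]
  · simp only [join, add, Function.update_of_ne hy]
    cases hty : t y with
    | none => cases s y <;> simp
    | some a => simp [hts y a hty]

end KSet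

namespace KSubmodular

variable {X : Type*} [DecidableEq X] {k : ℕ} {g : KSet X k → ℝ}

theorem marg_add_marg_nonneg (hsub : KSubmodular g) {s : KSet X k} {x : X} (hx : s x = none)
    {i j : Fin k} (hij : i ≠ j) : 0 ≤ marg g s x i + marg g s x j := by
  have h := hsub (KSet.add s x i) (KSet.add s x j)
  rw [KSet.meet_add_add s hx hij, KSet.join_add_add s hx hij] at h
  simp only [marg]
  linarith

theorem marg_le_of_le (hsub : KSubmodular g) {s t : KSet X k} (hts : KSet.le t s) {x : X}
    (hx : s x = none) (i : Fin k) : marg g s x i ≤ marg g t x i := by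
  have h := hsub (KSet.add t x i) s
  rw [KSet.meet_add_of_le hts hx, KSet.join_add_of_le hts hx] at h
  simp only [marg]
  linarith

theorem neg_marg_le_of_isMax [Nontrivial (Fin k)] (hsub : KSubmodular g) {c s : KSet X k}
    (hcs : KSet.le c s) {x : X} (hx : s x = none) {i : Fin k}
    (hi : ∀ j, marg g c x j ≤ marg g c x i) : -marg g s x i ≤ marg g c x i := by
  obtain ⟨j, hji⟩ := exists_ne i
  linarith [hsub.marg_add_marg_nonneg hx hji.symm, hsub.marg_le_of_le hcs hx j, hi j]

theorem update_sub_add_le_two_mul_marg [Nontrivial (Fin k)] (hsub : KSubmodular g)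
    {c s : KSet X k} (hcs : KSet.le c s) {x : X} (hx : s x = none) {i : Fin k}
    (hi : ∀ j, marg g c x j ≤ marg g c x i) (o : Option (Fin k)) :
    g (Function.update s x o) - g (KSet.add s x i) ≤ 2 * marg g c x i := by
  have hneg := hsub.neg_marg_le_of_isMax hcs hx hi
  cases o with
  | none =>
    have hgain_nonneg :=
      hsub.neg_marg_le_of_isMax (KSet.le_refl c) (KSet.eq_none_of_le hcs hx) hi
    rw [Function.update_eq_self_iff.mpr hx.symm]
    unfold marg at *
    linarith
  | some a =>
    have hmarg_a := (hsub.marg_le_of_le hcs hx a).trans (hi a)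
    change g (KSet.add s x a) - _ ≤ _
    unfold marg at *
    linarith

theorem join_join_sub_join_join_add_le [Nontrivial (Fin k)] (hsub : KSubmodular g)
    (v : KSet X k) {c : KSet X k} {x : X} (hx : c x = none) {i : Fin k}
    (hi : ∀ j, marg g c x j ≤ marg g c x i) :
    g (KSet.join (KSet.join v c) c) - g (KSet.join (KSet.join v (KSet.add c x i)) (KSet.add c x i))
      ≤ 2 * marg g c x i := by
  set w := KSet.join (KSet.join v c) c
  have hcs : KSet.le c (Function.update w x none) := by
    intro y a hy
    have hyx : y ≠ x := by rintro rfl; simp [hx] at hy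
    rw [Function.update_of_ne hyx]
    exact KSet.le_join_join_self v c y a hy
  have key := hsub.update_sub_add_le_two_mul_marg hcs (Function.update_self x none w) hi (w x)
  rwa [Function.update_idem, Function.update_eq_self, KSet.add, Function.update_idem,
    ← KSet.join_join_add] at key

end KSubmodular

theorem GreedyChain.of_succ {X : Type*} [DecidableEq X] {k : ℕ} {g : KSet X k → ℝ} {m : ℕ}
    {c : ℕ → KSet X k} (hc : GreedyChain g (m + 1) c) : GreedyChain g m c :=
  ⟨hc.1, fun p hp => hc.2 p (Nat.lt_succ_of_lt hp)⟩

theorem lemma3b_general {X : Type*} [DecidableEq X] {k : ℕ} (hk : 2 ≤ k)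
    (g : KSet X k → ℝ) (hsub : KSubmodular g)
    (hnorm : g (KSet.bot X k) = 0)
    (m : ℕ) (c : ℕ → KSet X k) (hc : GreedyChain g m c) (v : KSet X k) :
    g v - g (KSet.join (KSet.join v (c m)) (c m)) ≤ 2 * g (c m) := by
  have : Nontrivial (Fin k) := Fin.nontrivial_iff_two_le.mpr hk
  induction m with
  | zero => simp [hc.1, KSet.join_join_bot, hnorm]
  | succ m ih =>
    obtain ⟨x, i, hx, hadd, hi⟩ := hc.2 m m.lt_succ_self
    have hloss := hsub.join_join_sub_join_join_add_le v hx hi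
    rw [← hadd] at hloss
    have hgain : g (c (m + 1)) = g (c m) + marg g (c m) x i := by
      rw [hadd, marg]
      ring
    linarith [ih hc.of_succ]

/-- **Lemma 3(b).** For `k ≥ 2`, a (not necessarily monotone)
normalized `k`-submodular `g`, a greedy chain `𝟎 = x⁰ ⊑ … ⊑ xᵐ` and any `k`-set
`v`, setting `vᵐ = (v ⊔ xᵐ) ⊔ xᵐ`, one has `g v - g vᵐ ≤ 2 * g xᵐ`. -/
theorem lemma3b {X : Type*} [DecidableEq X] {k : ℕ} (hk : 2 ≤ k)
    (g : KSet X k → ℝ) (hnn : ∀ s : KSet X k, 0 ≤ g s) (hsub : KSubmodular g)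
    (hnorm : g (KSet.bot X k) = 0)
    (m : ℕ) (c : ℕ → KSet X k) (hc : GreedyChain g m c) (v : KSet X k) :
    g v - g (KSet.join (KSet.join v (c m)) (c m)) ≤ 2 * g (c m) :=
  lemma3b_general hk g hsub hnorm m c hc v
end

section
/- Let g : (k+1)^𝒳 → ℝ≥0 be a monotone normalized k-submodular function, let 𝟎 = x⁰ ⊑ x¹ ⊑ … ⊑ xᵐ = 𝐱 be a greedy chain for g, let τ ∈ ℝ, and let v be a k-set with g(v) ≥ τ. Then τ − g(𝐱) ≤ g(𝐱) + Σ_{y ∈ E(v) ∖ E(𝐱)} Δ_{y, v(y)} g(𝐱). -/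
/-!
Let `o^p` be `x^p` with every element outside `E(x^p)` placed where `v` places it (`KSet.fill`),
so that `o^0 = v` and `o^m` extends `𝐱` by `v` on `E(v) ∖ E(𝐱)`. At the greedy step
`x^p = x^{p-1} ⊔ (x_p, i_p)`, moving `x_p` in `o^{p-1}` from its `v`-position to `i_p` lowers `g`
by at most `Δ_{x_p, i_p} g(x^{p-1}) = g(x^p) - g(x^{p-1})`: by diminishing returns the gain of
`x_p` at its `v`-position is at most its gain at that position over `x^{p-1}`, which the greedy
choice bounds. Telescoping gives `g(v) ≤ g(o^m) + g(𝐱)`, and diminishing returns once more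
bounds `g(o^m)` by `g(𝐱) + Σ_{y ∈ E(v) ∖ E(𝐱)} Δ_{y, v(y)} g(𝐱)`.
-/

namespace KSet

variable {X : Type*} {k : ℕ}

def fill (s v : KSet X k) : KSet X k := fun z => (s z).or (v z)

theorem bot_fill (v : KSet X k) : (bot X k).fill v = v := rfl

theorem eq_none_of_le_s7 {s t : KSet X k} (hst : s.le t) {y : X} (ht : t y = none) :
    s y = none := by
  cases hs : s y with
  | none => rfl
  | some j => simp [hst y j hs] at ht

theorem fill_eq_piecewise [Fintype X] [DecidableEq X] (s v : KSet X k) :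
    s.fill v = (Finset.univ.filter fun y => v y ≠ none ∧ s y = none).piecewise v s := by
  funext z
  cases hs : s z <;> cases hv : v z <;> simp [fill, Finset.piecewise, hs, hv]

variable [DecidableEq X] {s t : KSet X k} {y : X}

theorem le_add (hy : s y = none) (i : Fin k) : s.le (s.add y i) := by
  intro z j hz
  have hzy : z ≠ y := by rintro rfl; simp [hy] at hz
  simpa [add, Function.update_of_ne hzy] using hz

theorem meet_add_of_le_s7 (hst : s.le t) (ht : t y = none) (i : Fin k) :
    (s.add y i).meet t = s := by
  funext z
  by_cases hzy : z = y
  · subst hzy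
    simp [meet, add, ht, eq_none_of_le_s7 hst ht]
  · cases hs : s z with
    | none => simp [meet, add, Function.update_of_ne hzy, hs]
    | some j => simp [meet, add, Function.update_of_ne hzy, hs, hst z j hs]

theorem join_add_of_le_s7 (hst : s.le t) (ht : t y = none) (i : Fin k) :
    (s.add y i).join t = t.add y i := by
  funext z
  by_cases hzy : z = y
  · subst hzy
    simp [join, add, ht]
  · cases hs : s z with
    | none => simp [join, add, Function.update_of_ne hzy, hs]
    | some j => simp [join, add, Function.update_of_ne hzy, hs, hst z j hs]

end KSet

section Marginal

variable {X : Type*} [DecidableEq X] {k : ℕ} {g : KSet X k → ℝ} {s t : KSet X k} {y : X}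

theorem marg_nonneg (hmono : KMonotone g) (hy : s y = none) (i : Fin k) :
    0 ≤ marg g s y i :=
  sub_nonneg.2 (hmono _ _ (KSet.le_add hy i))

theorem marg_le_marg_of_le (hsub : KSubmodular g) (hst : s.le t) (ht : t y = none)
    (i : Fin k) : marg g t y i ≤ marg g s y i := by
  have h := hsub (s.add y i) t
  rw [KSet.meet_add_of_le_s7 hst ht, KSet.join_add_of_le_s7 hst ht] at h
  simp only [marg]
  linarith

theorem fill_le_fill_add_add_marg (hsub : KSubmodular g) (hmono : KMonotone g)
    (hy : s y = none) {i : Fin k} (hi : ∀ j, marg g s y j ≤ marg g s y i) (v : KSet X k) :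
    g (s.fill v) ≤ g ((s.add y i).fill v) + marg g s y i := by
  set r : KSet X k := Function.update (s.fill v) y none
  have hr : r y = none := Function.update_self ..
  have hsr : s.le r := by
    intro z j hz
    have hzy : z ≠ y := by rintro rfl; simp [hy] at hz
    simp [r, Function.update_of_ne hzy, KSet.fill, hz]
  have hadd : (s.add y i).fill v = r.add y i := by
    funext z
    by_cases hzy : z = y
    · subst hzy; simp [KSet.fill, KSet.add]
    · simp [r, KSet.fill, KSet.add, Function.update_of_ne hzy]
  have hfill : s.fill v = Function.update r y (v y) := by
    rw [Function.update_idem, eq_comm, Function.update_eq_self_iff]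
    simp [KSet.fill, hy]
  have hr_le : g r ≤ g (r.add y i) := sub_nonneg.1 (marg_nonneg hmono hr i)
  rw [hadd, hfill]
  cases hv : v y with
  | none =>
    rw [Function.update_eq_self_iff.2 hr.symm]
    linarith [marg_nonneg hmono hy i]
  | some j =>
    have h := (marg_le_marg_of_le hsub hsr hr j).trans (hi j)
    simp only [marg, KSet.add] at h hr_le ⊢
    linarith

theorem piecewise_le_add_sum_marg (hsub : KSubmodular g)
    (x v : KSet X k) {D : Finset X} (hD : ∀ y ∈ D, x y = none) :
    g (D.piecewise v x) ≤ g x + ∑ y ∈ D, (v y).elim 0 (marg g x y) := by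
  induction D using Finset.induction_on with
  | empty => simp
  | insert a D ha ih =>
    rw [Finset.piecewise_insert, Finset.sum_insert ha]
    have hDx := ih fun y hy => hD y (Finset.mem_insert_of_mem hy)
    have hxa : x a = none := hD a (Finset.mem_insert_self a D)
    have hta : D.piecewise v x a = none := by rw [D.piecewise_eq_of_notMem _ _ ha, hxa]
    have hxt : x.le (D.piecewise v x) := by
      intro z j hz
      have hzD : z ∉ D := fun h => by simp [hD z (Finset.mem_insert_of_mem h)] at hz
      rwa [D.piecewise_eq_of_notMem _ _ hzD]
    cases hv : v a with
    | none =>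
      rw [Function.update_eq_self_iff.2 hta.symm]
      simpa using hDx
    | some j =>
      have h := marg_le_marg_of_le hsub hxt hta j
      simp only [marg, KSet.add] at h
      simp only [Option.elim_some, marg, KSet.add]
      linarith

theorem GreedyChain.le_fill_add (hsub : KSubmodular g) (hmono : KMonotone g)
    (hnorm : g (KSet.bot X k) = 0) {m : ℕ} {c : ℕ → KSet X k} (hc : GreedyChain g m c)
    (v : KSet X k) : ∀ p ≤ m, g v ≤ g ((c p).fill v) + g (c p) := by
  intro p
  induction p with
  | zero => intro; simp [hc.1, KSet.bot_fill, hnorm]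
  | succ p ih =>
    intro hp
    obtain ⟨y, i, hy, hstep, hgreedy⟩ := hc.2 p hp
    have h := fill_le_fill_add_add_marg hsub hmono hy hgreedy v
    rw [← hstep] at h
    have hgain : g (c (p + 1)) = g (c p) + marg g (c p) y i := by rw [hstep, marg]; ring
    linarith [ih (by omega)]

end Marginal

theorem tau_sub_le_monotone_general {X : Type*} [Fintype X] [DecidableEq X] {k : ℕ}
    (g : KSet X k → ℝ) (hsub : KSubmodular g)
    (hmono : KMonotone g) (hnorm : g (KSet.bot X k) = 0)
    (m : ℕ) (c : ℕ → KSet X k) (hc : GreedyChain g m c)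
    (τ : ℝ) (v : KSet X k) (hv : τ ≤ g v) :
    τ - g (c m) ≤ g (c m) +
      ∑ y ∈ Finset.univ.filter (fun y => v y ≠ none ∧ c m y = none),
        (v y).elim 0 (fun i => marg g (c m) y i) := by
  have hchain := hc.le_fill_add hsub hmono hnorm v m le_rfl
  have hfill := piecewise_le_add_sum_marg hsub (c m) v
    (D := Finset.univ.filter fun y => v y ≠ none ∧ c m y = none) (fun y hy => by simp_all)
  rw [← KSet.fill_eq_piecewise] at hfill
  linarith

/-- For a monotone normalized `k`-submodular `g`, a greedy
chain `𝟎 = x⁰ ⊑ … ⊑ xᵐ = 𝐱`, `τ : ℝ`, and a `k`-set `v` with `g v ≥ τ`: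
`τ - g 𝐱 ≤ g 𝐱 + ∑_{y ∈ E(v) \ E(𝐱)} Δ_{y, v(y)} g (𝐱)`. -/
theorem tau_sub_le_monotone {X : Type*} [Fintype X] [DecidableEq X] {k : ℕ}
    (g : KSet X k → ℝ) (hnn : ∀ s : KSet X k, 0 ≤ g s) (hsub : KSubmodular g)
    (hmono : KMonotone g) (hnorm : g (KSet.bot X k) = 0)
    (m : ℕ) (c : ℕ → KSet X k) (hc : GreedyChain g m c)
    (τ : ℝ) (v : KSet X k) (hv : τ ≤ g v) :
    τ - g (c m) ≤ g (c m) +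
      ∑ y ∈ Finset.univ.filter (fun y => v y ≠ none ∧ c m y = none),
        (v y).elim 0 (fun i => marg g (c m) y i) :=
  tau_sub_le_monotone_general g hsub hmono hnorm m c hc τ v hv
end

section
/- (Lemma 2, non-monotone case) Let k ≥ 2, let g : (k+1)^𝒳 → ℝ≥0 be a normalized k-submodular function (not necessarily monotone), w : 𝒳 → ℝ>0 a positive weight function, τ > 0, W̄ > 0 and ε ∈ (0,1]. If the k-set 𝐬 returned by Algorithm 1 with inputs (τ, W̄, ε) contains a big element, then w(𝐬) ≤ ((4−ε)/(3ε))·W̄ and g(𝐬) ≥ τ. -/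
/-- A choice of position in `[k]` maximizing `f`. -/
noncomputable def argmaxFin {k : ℕ} [NeZero k] (f : Fin k → ℝ) : Fin k :=
  Classical.choose (Finset.exists_max_image Finset.univ f
    ⟨⟨0, Nat.pos_of_ne_zero (NeZero.ne k)⟩, Finset.mem_univ _⟩)

open Classical in
/-- One step of Algorithm 1, processing the arriving element `x` with current
solution `s`, threshold `τ`, density threshold `θ` and cost upper bound `A`:
if `x` is big (`w x ≤ A` and `max_i g((x,i)) ≥ τ`) then restart from `(x,i')`
with `i'` maximizing `g((x,i))`; otherwise add `(x,i')` with `i'` maximizing the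
marginal gain, provided `Δ_{x,i'}g(s)/w(x) ≥ θ` and `w(s) + w(x) ≤ A`. -/
noncomputable def alg1Step {X : Type*} [Fintype X] [DecidableEq X] {k : ℕ} [NeZero k]
    (g : KSet X k → ℝ) (w : X → ℝ) (τ θ A : ℝ) (s : KSet X k) (x : X) : KSet X k :=
  if w x ≤ A ∧ τ ≤ g (KSet.single x (argmaxFin fun i => g (KSet.single x i))) then
    KSet.single x (argmaxFin fun i => g (KSet.single x i))
  else if θ ≤ marg g s x (argmaxFin fun i => marg g s x i) / w x ∧ wtot w s + w x ≤ A then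
    KSet.add s x (argmaxFin fun i => marg g s x i)
  else s

/-- Algorithm 1: starting from `𝟎`, process the elements of the ground set in
their arrival order `order`. -/
noncomputable def alg1 {X : Type*} [Fintype X] [DecidableEq X] {k : ℕ} [NeZero k]
    (g : KSet X k → ℝ) (w : X → ℝ) (τ θ A : ℝ) (order : List X) : KSet X k :=
  order.foldl (alg1Step g w τ θ A) (KSet.bot X k)

/-- `x` is a big element: `w x ≤ A` and `max_{i ∈ [k]} g((x,i)) ≥ τ`. -/
def IsBig {X : Type*} [DecidableEq X] {k : ℕ} (g : KSet X k → ℝ) (w : X → ℝ)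
    (τ A : ℝ) (x : X) : Prop :=
  w x ≤ A ∧ ∃ i : Fin k, τ ≤ g (KSet.single x i)


/-
Call a solution feasible when its weight is at most `A` and its value at least `τ`. A step of
Algorithm 1 keeps a feasible solution feasible: it either restarts from a big singleton, which is
feasible by definition, or adds an element whose marginal gain is at least `θ · w(x) ≥ 0` while
respecting the budget `A`, or changes nothing. When the big element arrives, the step restarts
from a big singleton, so the solution is feasible from then on.
-/

lemma le_argmaxFin {k : ℕ} [NeZero k] (f : Fin k → ℝ) (i : Fin k) : f i ≤ f (argmaxFin f) :=
  (Classical.choose_spec (Finset.exists_max_image Finset.univ f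
    ⟨⟨0, Nat.pos_of_ne_zero (NeZero.ne k)⟩, Finset.mem_univ _⟩)).2 i (Finset.mem_univ i)

section Weight

variable {X : Type*} [Fintype X] [DecidableEq X] {k : ℕ}

lemma wtot_single (w : X → ℝ) (x : X) (i : Fin k) : wtot w (KSet.single x i) = w x := by
  have hsupp : Finset.univ.filter (fun y => KSet.single x i y ≠ none) = {x} := by
    ext y
    simp [KSet.single]
  rw [wtot, hsupp, Finset.sum_singleton]

lemma wtot_add_le {w : X → ℝ} (hw : ∀ y, 0 ≤ w y) (s : KSet X k) (x : X) (i : Fin k) :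
    wtot w (KSet.add s x i) ≤ w x + wtot w s := by
  set supp := Finset.univ.filter (fun y => s y ≠ none)
  have hsub : Finset.univ.filter (fun y => KSet.add s x i y ≠ none) ⊆ insert x supp := by
    intro y hy
    by_cases hyx : y = x
    · simp [hyx]
    · rw [Finset.mem_filter, KSet.add, Function.update_of_ne hyx] at hy
      simp [supp, hy.2]
  calc wtot w (KSet.add s x i) ≤ ∑ y ∈ insert x supp, w y :=
        Finset.sum_le_sum_of_subset_of_nonneg hsub fun y _ _ => hw y
    _ ≤ w x + wtot w s := by
        by_cases hx : x ∈ supp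
        · rw [Finset.insert_eq_of_mem hx]
          exact le_add_of_nonneg_left (hw x)
        · rw [Finset.sum_insert hx, wtot]

end Weight

def Feasible {X : Type*} [Fintype X] {k : ℕ} (g : KSet X k → ℝ) (w : X → ℝ) (τ A : ℝ)
    (s : KSet X k) : Prop :=
  wtot w s ≤ A ∧ τ ≤ g s

lemma feasible_single_iff {X : Type*} [Fintype X] [DecidableEq X] {k : ℕ} {g : KSet X k → ℝ}
    {w : X → ℝ} {τ A : ℝ} {x : X} {i : Fin k} :
    Feasible g w τ A (KSet.single x i) ↔ w x ≤ A ∧ τ ≤ g (KSet.single x i) := by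
  rw [Feasible, wtot_single]

section Feasibility

variable {X : Type*} [Fintype X] [DecidableEq X] {k : ℕ} [NeZero k]
  {g : KSet X k → ℝ} {w : X → ℝ} {τ θ A : ℝ}

lemma feasible_alg1Step (hw : ∀ y, 0 < w y) (hθ : 0 ≤ θ) {s : KSet X k} (x : X)
    (hs : Feasible g w τ A s) :
    Feasible g w τ A (alg1Step g w τ θ A s x) := by
  unfold alg1Step
  split_ifs with hbig hgain
  · exact feasible_single_iff.mpr hbig
  · set i := argmaxFin fun i => marg g s x i
    have hmarg : 0 ≤ marg g s x i :=
      (mul_nonneg hθ (hw x).le).trans ((le_div_iff₀ (hw x)).mp hgain.1)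
    refine ⟨(wtot_add_le (fun y => (hw y).le) s x i).trans (by linarith [hgain.2]), ?_⟩
    unfold marg at hmarg
    linarith [hs.2]
  · exact hs

lemma feasible_alg1Step_of_isBig (s : KSet X k) {x : X} (hx : IsBig g w τ A x) :
    Feasible g w τ A (alg1Step g w τ θ A s x) := by
  obtain ⟨hwx, i, hi⟩ := hx
  have hbig : w x ≤ A ∧ τ ≤ g (KSet.single x (argmaxFin fun i => g (KSet.single x i))) :=
    ⟨hwx, hi.trans (le_argmaxFin (fun i => g (KSet.single x i)) i)⟩
  rw [alg1Step, if_pos hbig]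
  exact feasible_single_iff.mpr hbig

lemma feasible_foldl_alg1Step (hw : ∀ y, 0 < w y) (hθ : 0 ≤ θ) (l : List X) {s : KSet X k}
    (hs : Feasible g w τ A s) :
    Feasible g w τ A (l.foldl (alg1Step g w τ θ A) s) := by
  induction l generalizing s with
  | nil => exact hs
  | cons x l ih => exact ih (feasible_alg1Step hw hθ x hs)

lemma feasible_foldl_alg1Step_of_mem_isBig (hw : ∀ y, 0 < w y) (hθ : 0 ≤ θ) {l : List X}
    {x : X} (hxl : x ∈ l) (hx : IsBig g w τ A x) (s : KSet X k) :
    Feasible g w τ A (l.foldl (alg1Step g w τ θ A) s) := by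
  obtain ⟨l₁, l₂, rfl⟩ := List.append_of_mem hxl
  rw [List.foldl_append, List.foldl_cons]
  exact feasible_foldl_alg1Step hw hθ l₂ (feasible_alg1Step_of_isBig _ hx)

end Feasibility

theorem lemma2_nonmonotone_general {X : Type*} [Fintype X] [DecidableEq X] {k : ℕ} [NeZero k]
    (g : KSet X k → ℝ)
    (w : X → ℝ) (hw : ∀ x, 0 < w x)
    (τ Wbar ε : ℝ) (hτ : 0 < τ) (hW : 0 < Wbar) (hε0 : 0 < ε)
    (order : List X) (hfull : ∀ x : X, x ∈ order)
    (hbig : ∃ x : X,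
      alg1 g w τ (ε * τ / Wbar) ((4 - ε) / (3 * ε) * Wbar) order x ≠ none ∧
      IsBig g w τ ((4 - ε) / (3 * ε) * Wbar) x) :
    wtot w (alg1 g w τ (ε * τ / Wbar) ((4 - ε) / (3 * ε) * Wbar) order) ≤
        (4 - ε) / (3 * ε) * Wbar ∧
      τ ≤ g (alg1 g w τ (ε * τ / Wbar) ((4 - ε) / (3 * ε) * Wbar) order) := by
  obtain ⟨x, -, hx⟩ := hbig
  have hθ : 0 ≤ ε * τ / Wbar := by positivity
  exact feasible_foldl_alg1Step_of_mem_isBig hw hθ (hfull x) hx _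

/-- **Lemma 2, non-monotone case.** For `k ≥ 2` and `g` not
necessarily monotone (so `A = ((4-ε)/(3ε))·W̄`): if the output of Algorithm 1
contains a big element, then `w(𝐬) ≤ ((4-ε)/(3ε))·W̄` and `g 𝐬 ≥ τ`. -/
theorem lemma2_nonmonotone {X : Type*} [Fintype X] [DecidableEq X] {k : ℕ} [NeZero k]
    (hk : 2 ≤ k)
    (g : KSet X k → ℝ) (hnn : ∀ s : KSet X k, 0 ≤ g s) (hsub : KSubmodular g)
    (hnorm : g (KSet.bot X k) = 0)
    (w : X → ℝ) (hw : ∀ x, 0 < w x)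
    (τ Wbar ε : ℝ) (hτ : 0 < τ) (hW : 0 < Wbar) (hε0 : 0 < ε) (hε1 : ε ≤ 1)
    (order : List X) (hnodup : order.Nodup) (hfull : ∀ x : X, x ∈ order)
    (hbig : ∃ x : X,
      alg1 g w τ (ε * τ / Wbar) ((4 - ε) / (3 * ε) * Wbar) order x ≠ none ∧
      IsBig g w τ ((4 - ε) / (3 * ε) * Wbar) x) :
    wtot w (alg1 g w τ (ε * τ / Wbar) ((4 - ε) / (3 * ε) * Wbar) order) ≤
        (4 - ε) / (3 * ε) * Wbar ∧
      τ ≤ g (alg1 g w τ (ε * τ / Wbar) ((4 - ε) / (3 * ε) * Wbar) order) :=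
  lemma2_nonmonotone_general g w hw τ Wbar ε hτ hW hε0 order hfull hbig
end
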